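/- (Feasibility of the limit plan.) With the notation of the previous theorem, let π_ε minimize ∬ c_ε dπ dπ over Π(σ,μ,ν) and suppose π_{ε(n)} converges weakly to π̄ along a sequence ε(n) ↓ 0. Then ∬ (d_S(s,s') − d_X(x,x'))² dπ̄ dπ̄ = GW(S,X)² and ∬ (d_S(s,s') − d_Y(y,y'))² dπ̄ dπ̄ = GW(S,Y)²; in particular the (S,X)- and (S,Y)-marginals of π̄ are optimal GW plans. -/

import Mathlib

open MeasureTheory Filter Topology

/-- The Gromov–Wasserstein cost of a plan `π` on `X × Y`. -/
noncomputable def gwCost {X Y : Type*} [PseudoMetricSpace X] [PseudoMetricSpace Y]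
    [MeasurableSpace X] [MeasurableSpace Y] (π : Measure (X × Y)) : ℝ :=
  ∫ p, ∫ q, (dist p.1 q.1 - dist p.2 q.2) ^ 2 ∂π ∂π

/-- `π` is a coupling of `μ` and `ν`. -/
def IsCoupling {X Y : Type*} [MeasurableSpace X] [MeasurableSpace Y]
    (π : Measure (X × Y)) (μ : Measure X) (ν : Measure Y) : Prop :=
  π.map Prod.fst = μ ∧ π.map Prod.snd = ν

/-- The squared Gromov–Wasserstein distance. -/
noncomputable def gwSq {X Y : Type*} [PseudoMetricSpace X] [PseudoMetricSpace Y]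
    [MeasurableSpace X] [MeasurableSpace Y] (μ : Measure X) (ν : Measure Y) : ℝ :=
  sInf {c | ∃ π : Measure (X × Y), IsCoupling π μ ν ∧ c = gwCost π}

/-- `π` is an optimal Gromov–Wasserstein plan between `μ` and `ν`. -/
def IsOptGW {X Y : Type*} [PseudoMetricSpace X] [PseudoMetricSpace Y]
    [MeasurableSpace X] [MeasurableSpace Y]
    (π : Measure (X × Y)) (μ : Measure X) (ν : Measure Y) : Prop :=
  IsCoupling π μ ν ∧ gwCost π = gwSq μ ν

/-- The LGW objective of a three-plan on `S × X × Y`: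
`∬ |d_X(x,x') − d_Y(y,y')|² dπ dπ`. -/
noncomputable def lgwCost {S X Y : Type*} [PseudoMetricSpace X] [PseudoMetricSpace Y]
    [MeasurableSpace S] [MeasurableSpace X] [MeasurableSpace Y]
    (π : Measure (S × X × Y)) : ℝ :=
  ∫ p, ∫ q, (dist p.2.1 q.2.1 - dist p.2.2 q.2.2) ^ 2 ∂π ∂π

/-- The linear Gromov–Wasserstein value with reference `(S, σ)`:
infimum of the LGW objective over three-plans whose `(S,X)`- and `(S,Y)`-marginals
are optimal GW plans. -/
noncomputable def lgw {S X Y : Type*} [PseudoMetricSpace S] [PseudoMetricSpace X]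
    [PseudoMetricSpace Y] [MeasurableSpace S] [MeasurableSpace X] [MeasurableSpace Y]
    (σ : Measure S) (μ : Measure X) (ν : Measure Y) : ℝ :=
  sInf {c | ∃ π : Measure (S × X × Y),
    IsOptGW (π.map (fun p => (p.1, p.2.1))) σ μ ∧
    IsOptGW (π.map (fun p => (p.1, p.2.2))) σ ν ∧
    c = lgwCost π}

/-- The cost `c_ε` on `(S × X × Y)²`. -/
noncomputable def cEps {S X Y : Type*} [PseudoMetricSpace S] [PseudoMetricSpace X]
    [PseudoMetricSpace Y] (ε : ℝ) (p q : S × X × Y) : ℝ :=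
  ε * (dist p.2.1 q.2.1 - dist p.2.2 q.2.2) ^ 2
    + (dist p.1 q.1 - dist p.2.1 q.2.1) ^ 2
    + (dist p.1 q.1 - dist p.2.2 q.2.2) ^ 2

/-- The quadratic functional `π ↦ ∬ c_ε dπ dπ` of the ε-multi-marginal GW problem. -/
noncomputable def mgwEps {S X Y : Type*} [PseudoMetricSpace S] [PseudoMetricSpace X]
    [PseudoMetricSpace Y] [MeasurableSpace S] [MeasurableSpace X] [MeasurableSpace Y]
    (ε : ℝ) (π : Measure (S × X × Y)) : ℝ :=
  ∫ p, ∫ q, cEps ε p q ∂π ∂π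

/-- `π ∈ Π(σ, μ, ν)`: three-marginal coupling. -/
def IsTripleCoupling {S X Y : Type*} [MeasurableSpace S] [MeasurableSpace X]
    [MeasurableSpace Y] (π : Measure (S × X × Y))
    (σ : Measure S) (μ : Measure X) (ν : Measure Y) : Prop :=
  π.map Prod.fst = σ ∧ π.map (fun p => p.2.1) = μ ∧ π.map (fun p => p.2.2) = ν

/-! Along the minimizers, `∬ c_ε dπ dπ = ∬ c_0 dπ dπ + ε · lgwCost π` with `lgwCost ≥ 0`, so for
every three-plan `π'` we get `∬ c_0 dπ_ε dπ_ε ≤ ∬ c_0 dπ' dπ' + ε · lgwCost π'`. The functional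
`π ↦ ∬ c_0 dπ dπ` is weakly continuous on the compact space and being a three-plan of `(σ, μ, ν)`
is a weakly closed condition, so the limit `π̄` is a three-plan minimizing `∬ c_0`, which is the sum
of the GW costs of its `(S,X)`- and `(S,Y)`-marginals. Gluing an arbitrary coupling of `(σ, μ)`
with the `(S,Y)`-marginal of `π̄` along their common first marginal `σ` gives a competing
three-plan, so the `(S,X)`-marginal of `π̄` has GW cost at most that of any coupling: it is an
optimal plan. The same argument applies to the `(S,Y)`-marginal. -/

open ProbabilityTheory

namespace MeasureTheory

theorem integral_integral_map {Z W E : Type*} [MeasurableSpace Z] [MeasurableSpace W]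
    [NormedAddCommGroup E] [NormedSpace ℝ E] (π : Measure Z) [IsFiniteMeasure π] {e : Z → W}
    (he : Measurable e) {f : W × W → E} (hf : StronglyMeasurable f) :
    ∫ p, ∫ q, f (p, q) ∂π.map e ∂π.map e = ∫ p, ∫ q, f (e p, e q) ∂π ∂π := by
  rw [integral_map he.aemeasurable hf.integral_prod_right'.aestronglyMeasurable]
  congr 1 with p
  exact integral_map he.aemeasurable (hf.comp_measurable measurable_prodMk_left).aestronglyMeasurable

theorem Measure.exists_map_eq_of_fst_eq {S X Y : Type*} [MeasurableSpace S]
    [MeasurableSpace X] [StandardBorelSpace X] [Nonempty X]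
    [MeasurableSpace Y] [StandardBorelSpace Y] [Nonempty Y]
    (γ₁ : Measure (S × X)) (γ₂ : Measure (S × Y)) [IsFiniteMeasure γ₁] [IsFiniteMeasure γ₂]
    (h : γ₁.fst = γ₂.fst) :
    ∃ π : Measure (S × X × Y),
      π.map (fun p => (p.1, p.2.1)) = γ₁ ∧ π.map (fun p => (p.1, p.2.2)) = γ₂ := by
  refine ⟨γ₁.fst ⊗ₘ (γ₁.condKernel ×ₖ γ₂.condKernel), ?_, ?_⟩
  · change Measure.map (Prod.map id Prod.fst) _ = _
    rw [← Measure.compProd_map measurable_fst, ← Kernel.fst_eq, Kernel.fst_prod,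
      Measure.disintegrate]
  · change Measure.map (Prod.map id Prod.snd) _ = _
    rw [← Measure.compProd_map measurable_snd, ← Kernel.snd_eq, Kernel.snd_prod, h,
      Measure.disintegrate]

namespace ProbabilityMeasure

theorem isClosed_setOf_map_eq {Z W : Type*} [TopologicalSpace Z] [MeasurableSpace Z]
    [OpensMeasurableSpace Z] [TopologicalSpace W] [HasOuterApproxClosed W] [MeasurableSpace W]
    [BorelSpace W] {g : Z → W} (hg : Continuous g) (m : Measure W) :
    IsClosed {π : ProbabilityMeasure Z | (π : Measure Z).map g = m} := by
  have hm : {ν : ProbabilityMeasure W | (ν : Measure W) = m}.Subsingleton :=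
    fun a ha b hb => Subtype.ext (ha.trans hb.symm)
  exact hm.isClosed.preimage (continuous_map hg)

theorem continuous_integral_integral {Z : Type*} [PseudoMetricSpace Z] [CompactSpace Z]
    [MeasurableSpace Z] [BorelSpace Z] {f : Z × Z → ℝ} (hf : Continuous f) :
    Continuous fun μ : ProbabilityMeasure Z => ∫ p, ∫ q, f (p, q) ∂μ ∂μ := by
  have hprod (μ : ProbabilityMeasure Z) : ∫ p, ∫ q, f (p, q) ∂μ ∂μ = ∫ z, f z ∂(μ.prod μ) :=
    (integral_prod f (hf.integrable_of_hasCompactSupport (.of_compactSpace f))).symm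
  simp_rw [hprod]
  exact (continuous_integral_boundedContinuousFunction (.mkOfCompact ⟨f, hf⟩)).comp
    (continuous_prod.comp (continuous_id.prodMk continuous_id))

end ProbabilityMeasure

end MeasureTheory

theorem IsCoupling.isProbabilityMeasure {X Y : Type*} [MeasurableSpace X] [MeasurableSpace Y]
    {π : Measure (X × Y)} {μ : Measure X} {ν : Measure Y} [IsProbabilityMeasure μ]
    (h : IsCoupling π μ ν) : IsProbabilityMeasure π :=
  have : IsProbabilityMeasure (π.map Prod.fst) := h.1 ▸ inferInstance
  Measure.isProbabilityMeasure_of_map Prod.fst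

theorem IsTripleCoupling.isProbabilityMeasure {S X Y : Type*} [MeasurableSpace S]
    [MeasurableSpace X] [MeasurableSpace Y] {π : Measure (S × X × Y)} {σ : Measure S}
    {μ : Measure X} {ν : Measure Y} [IsProbabilityMeasure σ] (h : IsTripleCoupling π σ μ ν) :
    IsProbabilityMeasure π :=
  have : IsProbabilityMeasure (π.map Prod.fst) := h.1 ▸ inferInstance
  Measure.isProbabilityMeasure_of_map Prod.fst

theorem isTripleCoupling_iff {S X Y : Type*} [MeasurableSpace S] [MeasurableSpace X]
    [MeasurableSpace Y] {π : Measure (S × X × Y)} {σ : Measure S} {μ : Measure X}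
    {ν : Measure Y} :
    IsTripleCoupling π σ μ ν ↔ IsCoupling (π.map fun p => (p.1, p.2.1)) σ μ ∧
      IsCoupling (π.map fun p => (p.1, p.2.2)) σ ν := by
  simp only [IsTripleCoupling, IsCoupling]
  rw [Measure.map_map measurable_fst (by fun_prop), Measure.map_map measurable_snd (by fun_prop),
    Measure.map_map measurable_fst (by fun_prop), Measure.map_map measurable_snd (by fun_prop)]
  exact ⟨fun ⟨hS, hX, hY⟩ => ⟨⟨hS, hX⟩, hS, hY⟩, fun ⟨⟨hS, hX⟩, _, hY⟩ => ⟨hS, hX, hY⟩⟩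

theorem isClosed_setOf_isTripleCoupling {S X Y : Type*}
    [PseudoMetricSpace S] [SecondCountableTopology S] [MeasurableSpace S] [BorelSpace S]
    [PseudoMetricSpace X] [SecondCountableTopology X] [MeasurableSpace X] [BorelSpace X]
    [PseudoMetricSpace Y] [SecondCountableTopology Y] [MeasurableSpace Y] [BorelSpace Y]
    (σ : Measure S) (μ : Measure X) (ν : Measure Y) :
    IsClosed {π : ProbabilityMeasure (S × X × Y) | IsTripleCoupling (π : Measure _) σ μ ν} :=
  (ProbabilityMeasure.isClosed_setOf_map_eq continuous_fst σ).inter <|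
    (ProbabilityMeasure.isClosed_setOf_map_eq (by fun_prop) μ).inter
      (ProbabilityMeasure.isClosed_setOf_map_eq (by fun_prop) ν)

theorem gwCost_nonneg {X Y : Type*} [PseudoMetricSpace X] [PseudoMetricSpace Y]
    [MeasurableSpace X] [MeasurableSpace Y] (π : Measure (X × Y)) : 0 ≤ gwCost π :=
  integral_nonneg fun _ => integral_nonneg fun _ => sq_nonneg _

theorem lgwCost_nonneg {S X Y : Type*} [PseudoMetricSpace X] [PseudoMetricSpace Y]
    [MeasurableSpace S] [MeasurableSpace X] [MeasurableSpace Y] (π : Measure (S × X × Y)) :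
    0 ≤ lgwCost π :=
  integral_nonneg fun _ => integral_nonneg fun _ => sq_nonneg _

theorem gwCost_map {Z X Y : Type*} [MeasurableSpace Z]
    [PseudoMetricSpace X] [SecondCountableTopology X] [MeasurableSpace X] [BorelSpace X]
    [PseudoMetricSpace Y] [SecondCountableTopology Y] [MeasurableSpace Y] [BorelSpace Y]
    (π : Measure Z) [IsFiniteMeasure π] {e : Z → X × Y} (he : Measurable e) :
    gwCost (π.map e) = ∫ p, ∫ q, (dist (e p).1 (e q).1 - dist (e p).2 (e q).2) ^ 2 ∂π ∂π :=
  integral_integral_map π he (by fun_prop : Continuous fun r : (X × Y) × (X × Y) =>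
    (dist r.1.1 r.2.1 - dist r.1.2 r.2.2) ^ 2).stronglyMeasurable

theorem isOptGW_of_forall_le {X Y : Type*} [PseudoMetricSpace X] [PseudoMetricSpace Y]
    [MeasurableSpace X] [MeasurableSpace Y] {π : Measure (X × Y)} {μ : Measure X}
    {ν : Measure Y} (h : IsCoupling π μ ν)
    (hle : ∀ γ : Measure (X × Y), IsCoupling γ μ ν → gwCost π ≤ gwCost γ) : IsOptGW π μ ν := by
  refine ⟨h, le_antisymm ?_ ?_⟩
  · exact le_csInf ⟨_, π, h, rfl⟩ fun _ ⟨γ, hγ, hc⟩ => hc ▸ hle γ hγ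
  · exact csInf_le ⟨0, fun _ ⟨γ, _, hc⟩ => hc ▸ gwCost_nonneg γ⟩ ⟨π, h, rfl⟩

section Compact

variable {S X Y : Type*}
  [PseudoMetricSpace S] [CompactSpace S] [MeasurableSpace S] [BorelSpace S]
  [PseudoMetricSpace X] [CompactSpace X] [MeasurableSpace X] [BorelSpace X]
  [PseudoMetricSpace Y] [CompactSpace Y] [MeasurableSpace Y] [BorelSpace Y]

theorem mgwEps_eq_mgwEps_zero_add (ε : ℝ) (π : Measure (S × X × Y)) [IsFiniteMeasure π] :
    mgwEps ε π = mgwEps 0 π + ε * lgwCost π := by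
  have hl : Continuous fun r : (S × X × Y) × (S × X × Y) =>
      (dist r.1.2.1 r.2.2.1 - dist r.1.2.2 r.2.2.2) ^ 2 := by fun_prop
  have hc : Continuous fun r : (S × X × Y) × (S × X × Y) => cEps 0 r.1 r.2 := by
    unfold cEps; fun_prop
  have hcε (p q : S × X × Y) :
      cEps ε p q = cEps 0 p q + ε * (dist p.2.1 q.2.1 - dist p.2.2 q.2.2) ^ 2 := by
    simp only [cEps]; ring
  simp only [mgwEps, lgwCost, hcε]
  rw [integral_integral_add (hc.integrable_of_hasCompactSupport (.of_compactSpace _))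
    ((hl.integrable_of_hasCompactSupport (.of_compactSpace _)).const_mul ε)]
  simp only [integral_const_mul]

theorem mgwEps_zero_eq (π : Measure (S × X × Y)) [IsFiniteMeasure π] :
    mgwEps 0 π =
      gwCost (π.map fun p => (p.1, p.2.1)) + gwCost (π.map fun p => (p.1, p.2.2)) := by
  have h₁ : Continuous fun r : (S × X × Y) × (S × X × Y) =>
      (dist r.1.1 r.2.1 - dist r.1.2.1 r.2.2.1) ^ 2 := by fun_prop
  have h₂ : Continuous fun r : (S × X × Y) × (S × X × Y) =>
      (dist r.1.1 r.2.1 - dist r.1.2.2 r.2.2.2) ^ 2 := by fun_prop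
  rw [gwCost_map π (by fun_prop), gwCost_map π (by fun_prop)]
  simp only [mgwEps, cEps, zero_mul, zero_add]
  exact integral_integral_add (h₁.integrable_of_hasCompactSupport (.of_compactSpace _))
    (h₂.integrable_of_hasCompactSupport (.of_compactSpace _))

theorem continuous_mgwEps (ε : ℝ) :
    Continuous fun π : ProbabilityMeasure (S × X × Y) => mgwEps ε (π : Measure (S × X × Y)) :=
  ProbabilityMeasure.continuous_integral_integral (f := fun r => cEps ε r.1 r.2)
    (by unfold cEps; fun_prop)

theorem mgwEps_zero_le_of_tendsto {πs : ℕ → ProbabilityMeasure (S × X × Y)}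
    {πbar : ProbabilityMeasure (S × X × Y)} {e : ℕ → ℝ} (he : ∀ n, 0 ≤ e n)
    (he0 : Tendsto e atTop (𝓝 0)) (hconv : Tendsto πs atTop (𝓝 πbar))
    (π : Measure (S × X × Y)) [IsFiniteMeasure π]
    (hmin : ∀ n, mgwEps (e n) (πs n : Measure (S × X × Y)) ≤ mgwEps (e n) π) :
    mgwEps 0 (πbar : Measure (S × X × Y)) ≤ mgwEps 0 π := by
  have hlhs := ((continuous_mgwEps 0).tendsto πbar).comp hconv
  have hrhs : Tendsto (fun n => mgwEps 0 π + e n * lgwCost π) atTop (𝓝 (mgwEps 0 π)) := by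
    simpa using tendsto_const_nhds.add (he0.mul_const (lgwCost π))
  refine le_of_tendsto_of_tendsto' hlhs hrhs fun n => ?_
  calc mgwEps 0 (πs n : Measure (S × X × Y))
      ≤ mgwEps 0 (πs n : Measure (S × X × Y)) + e n * lgwCost (πs n : Measure (S × X × Y)) :=
        le_add_of_nonneg_right (mul_nonneg (he n) (lgwCost_nonneg _))
    _ = mgwEps (e n) (πs n : Measure (S × X × Y)) := (mgwEps_eq_mgwEps_zero_add _ _).symm
    _ ≤ mgwEps (e n) π := hmin n
    _ = mgwEps 0 π + e n * lgwCost π := mgwEps_eq_mgwEps_zero_add _ _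

end Compact

theorem isOptGW_map_of_forall_mgwEps_zero_le {S X Y : Type*}
    [PseudoMetricSpace S] [CompactSpace S] [MeasurableSpace S] [BorelSpace S]
    [MetricSpace X] [CompactSpace X] [MeasurableSpace X] [BorelSpace X]
    [MetricSpace Y] [CompactSpace Y] [MeasurableSpace Y] [BorelSpace Y]
    {σ : Measure S} {μ : Measure X} {ν : Measure Y}
    [IsProbabilityMeasure σ] [IsProbabilityMeasure μ] [IsProbabilityMeasure ν]
    {π : Measure (S × X × Y)} (hπ : IsTripleCoupling π σ μ ν)
    (hmin : ∀ π', IsTripleCoupling π' σ μ ν → mgwEps 0 π ≤ mgwEps 0 π') :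
    IsOptGW (π.map fun p => (p.1, p.2.1)) σ μ ∧ IsOptGW (π.map fun p => (p.1, p.2.2)) σ ν := by
  have := nonempty_of_isProbabilityMeasure μ
  have := nonempty_of_isProbabilityMeasure ν
  have := hπ.isProbabilityMeasure
  obtain ⟨h₁, h₂⟩ := isTripleCoupling_iff.1 hπ
  have hglue {γ₁ : Measure (S × X)} {γ₂ : Measure (S × Y)} (hγ₁ : IsCoupling γ₁ σ μ)
      (hγ₂ : IsCoupling γ₂ σ ν) : mgwEps 0 π ≤ gwCost γ₁ + gwCost γ₂ := by
    have := hγ₁.isProbabilityMeasure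
    have := hγ₂.isProbabilityMeasure
    obtain ⟨π', hπ'₁, hπ'₂⟩ := Measure.exists_map_eq_of_fst_eq γ₁ γ₂ (hγ₁.1.trans hγ₂.1.symm)
    have hπ' : IsTripleCoupling π' σ μ ν := isTripleCoupling_iff.2 ⟨hπ'₁ ▸ hγ₁, hπ'₂ ▸ hγ₂⟩
    have := hπ'.isProbabilityMeasure
    simpa only [mgwEps_zero_eq π', hπ'₁, hπ'₂] using hmin π' hπ'
  rw [mgwEps_zero_eq] at hglue
  exact ⟨isOptGW_of_forall_le h₁ fun γ hγ => by linarith [hglue hγ h₂],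
    isOptGW_of_forall_le h₂ fun γ hγ => by linarith [hglue h₁ hγ]⟩

theorem mgw_limit_feasible_general
    {S X Y : Type*}
    [MetricSpace S] [CompactSpace S] [MeasurableSpace S] [BorelSpace S]
    [MetricSpace X] [CompactSpace X] [MeasurableSpace X] [BorelSpace X]
    [MetricSpace Y] [CompactSpace Y] [MeasurableSpace Y] [BorelSpace Y]
    (σ : Measure S) (μ : Measure X) (ν : Measure Y)
    [IsProbabilityMeasure σ] [IsProbabilityMeasure μ] [IsProbabilityMeasure ν]
    (πf : ℝ → ProbabilityMeasure (S × X × Y))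
    (hmin : ∀ ε : ℝ, 0 < ε →
      IsTripleCoupling (πf ε : Measure (S × X × Y)) σ μ ν ∧
      ∀ π' : Measure (S × X × Y), IsTripleCoupling π' σ μ ν →
        mgwEps ε (πf ε : Measure (S × X × Y)) ≤ mgwEps ε π')
    (πbar : ProbabilityMeasure (S × X × Y)) (e : ℕ → ℝ)
    (hpos : ∀ n, 0 < e n) (he0 : Tendsto e atTop (𝓝 0))
    (hconv : Tendsto (fun n => πf (e n)) atTop (𝓝 πbar)) :
    (∫ p, ∫ q, (dist p.1 q.1 - dist p.2.1 q.2.1) ^ 2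
        ∂(πbar : Measure (S × X × Y)) ∂(πbar : Measure (S × X × Y))) = gwSq σ μ ∧
    (∫ p, ∫ q, (dist p.1 q.1 - dist p.2.2 q.2.2) ^ 2
        ∂(πbar : Measure (S × X × Y)) ∂(πbar : Measure (S × X × Y))) = gwSq σ ν ∧
    IsOptGW ((πbar : Measure (S × X × Y)).map (fun p => (p.1, p.2.1))) σ μ ∧
    IsOptGW ((πbar : Measure (S × X × Y)).map (fun p => (p.1, p.2.2))) σ ν := by
  have hbar : IsTripleCoupling (πbar : Measure (S × X × Y)) σ μ ν :=
    (isClosed_setOf_isTripleCoupling σ μ ν).mem_of_tendsto hconv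
      (.of_forall fun n => (hmin _ (hpos n)).1)
  have hbar_min (π' : Measure (S × X × Y)) (hπ' : IsTripleCoupling π' σ μ ν) :
      mgwEps 0 (πbar : Measure (S × X × Y)) ≤ mgwEps 0 π' :=
    have := hπ'.isProbabilityMeasure
    mgwEps_zero_le_of_tendsto (fun n => (hpos n).le) he0 hconv π'
      fun n => (hmin _ (hpos n)).2 π' hπ'
  obtain ⟨h₁, h₂⟩ := isOptGW_map_of_forall_mgwEps_zero_le hbar hbar_min
  exact ⟨(gwCost_map _ (by fun_prop)).symm.trans h₁.2, (gwCost_map _ (by fun_prop)).symm.trans h₂.2,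
    h₁, h₂⟩

/-- feasibility of the limit plan: the limit `π̄` of minimizers satisfies
`∬ (d_S − d_X)² dπ̄ dπ̄ = GW(S,X)²` and `∬ (d_S − d_Y)² dπ̄ dπ̄ = GW(S,Y)²`; in particular
its `(S,X)`- and `(S,Y)`-marginals are optimal GW plans. -/
theorem mgw_limit_feasible
    {S X Y : Type*}
    [MetricSpace S] [CompactSpace S] [MeasurableSpace S] [BorelSpace S]
    [MetricSpace X] [CompactSpace X] [MeasurableSpace X] [BorelSpace X]
    [MetricSpace Y] [CompactSpace Y] [MeasurableSpace Y] [BorelSpace Y]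
    (σ : Measure S) (μ : Measure X) (ν : Measure Y)
    [IsProbabilityMeasure σ] [IsProbabilityMeasure μ] [IsProbabilityMeasure ν]
    (πf : ℝ → ProbabilityMeasure (S × X × Y))
    (hmin : ∀ ε : ℝ, 0 < ε →
      IsTripleCoupling (πf ε : Measure (S × X × Y)) σ μ ν ∧
      ∀ π' : Measure (S × X × Y), IsTripleCoupling π' σ μ ν →
        mgwEps ε (πf ε : Measure (S × X × Y)) ≤ mgwEps ε π')
    (πbar : ProbabilityMeasure (S × X × Y)) (e : ℕ → ℝ)
    (hpos : ∀ n, 0 < e n) (hanti : StrictAnti e) (he0 : Tendsto e atTop (𝓝 0))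
    (hconv : Tendsto (fun n => πf (e n)) atTop (𝓝 πbar)) :
    (∫ p, ∫ q, (dist p.1 q.1 - dist p.2.1 q.2.1) ^ 2
        ∂(πbar : Measure (S × X × Y)) ∂(πbar : Measure (S × X × Y))) = gwSq σ μ ∧
    (∫ p, ∫ q, (dist p.1 q.1 - dist p.2.2 q.2.2) ^ 2
        ∂(πbar : Measure (S × X × Y)) ∂(πbar : Measure (S × X × Y))) = gwSq σ ν ∧
    IsOptGW ((πbar : Measure (S × X × Y)).map (fun p => (p.1, p.2.1))) σ μ ∧
    IsOptGW ((πbar : Measure (S × X × Y)).map (fun p => (p.1, p.2.2))) σ ν :=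
  mgw_limit_feasible_general σ μ ν πf hmin πbar e hpos he0 hconv
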